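/- arXiv:2005.03390 — 6 statements merged into one kernel-verified Lean document; each statement's English description precedes it below -/
import Mathlib

section
/- Let g1, g2, g3 be nonzero, pairwise distinct real numbers with g2*g3 + g3*g1 + g1*g2 = 0. For the complex 0 → ℝ^5 →^{d0} ℝ^4 →^{d1} ℝ → 0 with d0 = [[0,0,0,0,g1],[0,0,0,0,g2],[0,0,0,0,g3],[-2*g1*h1,0,0,0,-h1]] (h1 ≠ 0) and d1 = [-(g2+g3)/3, -(g3+g1)/3, -(g1+g2)/3, 0], the homology has dimensions 3 at degree 0 (i.e., dim ker d0 = 3), 1 at degree 1 (i.e., dim ker d1 − rank d0 = 1), and 0 at degree 2 (i.e., d1 is surjective). -/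
set_option maxHeartbeats 1000000
set_option synthInstance.maxHeartbeats 400000

theorem stmt1 (g1 g2 g3 h1 : ℝ)
    (hne : g1 ≠ 0 ∧ g2 ≠ 0 ∧ g3 ≠ 0)
    (hdist : g1 ≠ g2 ∧ g2 ≠ g3 ∧ g1 ≠ g3)
    (hh1 : h1 ≠ 0)
    (hg : g2*g3 + g3*g1 + g1*g2 = 0) :
    let d0 : (Fin 5 → ℝ) →ₗ[ℝ] (Fin 4 → ℝ) :=
      Matrix.mulVecLin
        (!![0,0,0,0,g1; 0,0,0,0,g2; 0,0,0,0,g3; -2*g1*h1,0,0,0,-h1])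
    let d1 : (Fin 4 → ℝ) →ₗ[ℝ] (Fin 1 → ℝ) :=
      Matrix.mulVecLin (!![-(g2+g3)/3, -(g3+g1)/3, -(g1+g2)/3, 0])
    Module.finrank ℝ (LinearMap.ker d0) = 3 ∧
    Module.finrank ℝ
      (↥(LinearMap.ker d1) ⧸
        (LinearMap.range d0).comap (LinearMap.ker d1).subtype) = 1 ∧
    Function.Surjective d1 := by
  obtain ⟨hg1, hg2, hg3⟩ := hne
  obtain ⟨h12, h23, h13⟩ := hdist
  intro d0 d1
  -- basic apply formulas
  have hd0 : ∀ v : Fin 5 → ℝ, d0 v =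
      ![g1 * v 4, g2 * v 4, g3 * v 4, -2*g1*h1 * v 0 + -h1 * v 4] := by
    intro v
    simp [d0, Matrix.mulVecLin_apply, Matrix.mulVec, dotProduct, Fin.sum_univ_five]
  have hd1 : ∀ v : Fin 4 → ℝ, d1 v =
      ![-(g2+g3)/3 * v 0 + -(g3+g1)/3 * v 1 + -(g1+g2)/3 * v 2] := by
    intro v
    simp [d1, Matrix.mulVecLin_apply, Matrix.mulVec, dotProduct, Fin.sum_univ_four]
  -- not all pairwise sums are zero
  have hsum : g2 + g3 ≠ 0 ∨ g3 + g1 ≠ 0 ∨ g1 + g2 ≠ 0 := by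
    by_contra h
    push_neg at h
    obtain ⟨a, b, c⟩ := h
    apply h12
    linarith
  -- surjectivity of d1
  have hsurj : Function.Surjective d1 := by
    intro y
    rcases hsum with h | h | h
    · exact ⟨![-3 * y 0 / (g2+g3), 0, 0, 0], by
        rw [hd1]; ext i; fin_cases i; simp; field_simp; ring⟩
    · exact ⟨![0, -3 * y 0 / (g3+g1), 0, 0], by
        rw [hd1]; ext i; fin_cases i; simp; field_simp; ring⟩
    · exact ⟨![0, 0, -3 * y 0 / (g1+g2), 0], by
        rw [hd1]; ext i; fin_cases i; simp; field_simp; ring⟩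
  -- ker d0 = ker f
  set f : (Fin 5 → ℝ) →ₗ[ℝ] (Fin 2 → ℝ) :=
    Matrix.mulVecLin (!![1,0,0,0,0; 0,0,0,0,1]) with hf
  have hfapp : ∀ v : Fin 5 → ℝ, f v = ![v 0, v 4] := by
    intro v
    simp [hf, Matrix.mulVecLin_apply, Matrix.mulVec, dotProduct, Fin.sum_univ_five]
  have hker : LinearMap.ker d0 = LinearMap.ker f := by
    ext v
    simp only [LinearMap.mem_ker, hd0 v, hfapp v]
    constructor
    · intro h
      have hv4 : v 4 = 0 := by
        have h0 := congrFun h 0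
        simp at h0
        tauto
      have hv0 : v 0 = 0 := by
        have h3 := congrFun h 3
        simp [hv4] at h3
        tauto
      ext i; fin_cases i <;> simp [hv0, hv4]
    · intro h
      have h0 := congrFun h 0
      have h1 := congrFun h 1
      simp at h0 h1
      ext i; fin_cases i <;> simp [h0, h1]
  have hfsurj : Function.Surjective f := by
    intro y
    exact ⟨![y 0, 0, 0, 0, y 1], by rw [hfapp]; ext i; fin_cases i <;> simp⟩
  -- finrank ker d0 = 3
  have hrnf := LinearMap.finrank_range_add_finrank_ker f
  rw [LinearMap.range_eq_top.2 hfsurj] at hrnf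
  simp [Module.finrank_fintype_fun_eq_card] at hrnf
  have hk0 : Module.finrank ℝ (LinearMap.ker d0) = 3 := by
    rw [hker]; omega
  -- finrank ker d1 = 3
  have hrn1 := LinearMap.finrank_range_add_finrank_ker d1
  rw [LinearMap.range_eq_top.2 hsurj] at hrn1
  simp [Module.finrank_fintype_fun_eq_card] at hrn1
  -- finrank range d0 = 2
  have hrn0 := LinearMap.finrank_range_add_finrank_ker d0
  rw [hk0] at hrn0
  simp [Module.finrank_fintype_fun_eq_card] at hrn0
  -- range d0 ≤ ker d1
  have hle : LinearMap.range d0 ≤ LinearMap.ker d1 := by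
    rintro _ ⟨x, rfl⟩
    rw [LinearMap.mem_ker, hd0, hd1, funext_iff]
    intro i
    fin_cases i
    show -(g2+g3)/3 * (g1 * x 4) + -(g3+g1)/3 * (g2 * x 4) + -(g1+g2)/3 * (g3 * x 4) = 0
    linear_combination (-2 * x 4 / 3) * hg
  refine ⟨hk0, ?_, hsurj⟩
  have hq := Submodule.finrank_quotient_add_finrank
    ((LinearMap.range d0).comap (LinearMap.ker d1).subtype)
  have hcomap : Module.finrank ℝ
      ((LinearMap.range d0).comap (LinearMap.ker d1).subtype) = 2 := by
    rw [LinearEquiv.finrank_eq (Submodule.comapSubtypeEquivOfLe hle)]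
    exact hrn0
  rw [hcomap] at hq
  omega
end

section
/- Let g1, g2, g3, h1 be real numbers with h1 ≠ 0 and g2*g3 + g3*g1 + g1*g2 = 0. Define d0 : ℝ^2 → ℝ^9 with rows (-1,0),(0,0),(0,0),(0,0),(g1+g2+g3,0),(0,g3−g2),(−g3,0),(g2,0),(h1,0), and d1 : ℝ^9 → ℝ^7 by the 7×9 matrix [[0,0,0,0,−g2−g3,0,g1−g3,g2−g1,0],[2h1,0,0,0,0,0,0,0,2],[0,2h1,0,0,0,0,0,0,0],[0,0,2h1,0,0,0,0,0,0],[0,0,0,2h1,0,0,0,0,0],[0,0,0,0,−h1,0,0,0,g1+g2+g3],[−2g1h1,0,0,0,−h1,0,−h1,h1,−g1]]. If moreover g1, g2, g3 are nonzero and pairwise distinct, then d1 ∘ d0 = 0, d0 is injective, ker d1 = im d0 (so the middle homology vanishes), and d1 is surjective. -/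
section aux
variable {α : Type*}
@[simp] lemma cv6_5 (x : α) (u : Fin 5 → α) : Matrix.vecCons x u 5 = u 4 := rfl
@[simp] lemma cv7_5 (x : α) (u : Fin 6 → α) : Matrix.vecCons x u 5 = u 4 := rfl
@[simp] lemma cv7_6 (x : α) (u : Fin 6 → α) : Matrix.vecCons x u 6 = u 5 := rfl
@[simp] lemma cv8_5 (x : α) (u : Fin 7 → α) : Matrix.vecCons x u 5 = u 4 := rfl
@[simp] lemma cv8_6 (x : α) (u : Fin 7 → α) : Matrix.vecCons x u 6 = u 5 := rfl
@[simp] lemma cv8_7 (x : α) (u : Fin 7 → α) : Matrix.vecCons x u 7 = u 6 := rfl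
@[simp] lemma cv9_5 (x : α) (u : Fin 8 → α) : Matrix.vecCons x u 5 = u 4 := rfl
@[simp] lemma cv9_6 (x : α) (u : Fin 8 → α) : Matrix.vecCons x u 6 = u 5 := rfl
@[simp] lemma cv9_7 (x : α) (u : Fin 8 → α) : Matrix.vecCons x u 7 = u 6 := rfl
@[simp] lemma cv9_8 (x : α) (u : Fin 8 → α) : Matrix.vecCons x u 8 = u 7 := rfl
@[simp] lemma fs1_0 : Fin.succ (0 : Fin 1) = 1 := rfl
@[simp] lemma fs2_0 : Fin.succ (0 : Fin 2) = 1 := rfl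
@[simp] lemma fs2_1 : Fin.succ (1 : Fin 2) = 2 := rfl
@[simp] lemma fs3_0 : Fin.succ (0 : Fin 3) = 1 := rfl
@[simp] lemma fs3_1 : Fin.succ (1 : Fin 3) = 2 := rfl
@[simp] lemma fs3_2 : Fin.succ (2 : Fin 3) = 3 := rfl
@[simp] lemma fs4_0 : Fin.succ (0 : Fin 4) = 1 := rfl
@[simp] lemma fs4_1 : Fin.succ (1 : Fin 4) = 2 := rfl
@[simp] lemma fs4_2 : Fin.succ (2 : Fin 4) = 3 := rfl
@[simp] lemma fs4_3 : Fin.succ (3 : Fin 4) = 4 := rfl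
@[simp] lemma fs5_0 : Fin.succ (0 : Fin 5) = 1 := rfl
@[simp] lemma fs5_1 : Fin.succ (1 : Fin 5) = 2 := rfl
@[simp] lemma fs5_2 : Fin.succ (2 : Fin 5) = 3 := rfl
@[simp] lemma fs5_3 : Fin.succ (3 : Fin 5) = 4 := rfl
@[simp] lemma fs5_4 : Fin.succ (4 : Fin 5) = 5 := rfl
@[simp] lemma fs6_0 : Fin.succ (0 : Fin 6) = 1 := rfl
@[simp] lemma fs6_1 : Fin.succ (1 : Fin 6) = 2 := rfl
@[simp] lemma fs6_2 : Fin.succ (2 : Fin 6) = 3 := rfl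
@[simp] lemma fs6_3 : Fin.succ (3 : Fin 6) = 4 := rfl
@[simp] lemma fs6_4 : Fin.succ (4 : Fin 6) = 5 := rfl
@[simp] lemma fs6_5 : Fin.succ (5 : Fin 6) = 6 := rfl
@[simp] lemma fs7_0 : Fin.succ (0 : Fin 7) = 1 := rfl
@[simp] lemma fs7_1 : Fin.succ (1 : Fin 7) = 2 := rfl
@[simp] lemma fs7_2 : Fin.succ (2 : Fin 7) = 3 := rfl
@[simp] lemma fs7_3 : Fin.succ (3 : Fin 7) = 4 := rfl
@[simp] lemma fs7_4 : Fin.succ (4 : Fin 7) = 5 := rfl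
@[simp] lemma fs7_5 : Fin.succ (5 : Fin 7) = 6 := rfl
@[simp] lemma fs7_6 : Fin.succ (6 : Fin 7) = 7 := rfl
@[simp] lemma fs8_0 : Fin.succ (0 : Fin 8) = 1 := rfl
@[simp] lemma fs8_1 : Fin.succ (1 : Fin 8) = 2 := rfl
@[simp] lemma fs8_2 : Fin.succ (2 : Fin 8) = 3 := rfl
@[simp] lemma fs8_3 : Fin.succ (3 : Fin 8) = 4 := rfl
@[simp] lemma fs8_4 : Fin.succ (4 : Fin 8) = 5 := rfl
@[simp] lemma fs8_5 : Fin.succ (5 : Fin 8) = 6 := rfl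
@[simp] lemma fs8_6 : Fin.succ (6 : Fin 8) = 7 := rfl
@[simp] lemma fs8_7 : Fin.succ (7 : Fin 8) = 8 := rfl
@[simp] lemma fmk2_0 (h : 0 < 2) : (⟨0, h⟩ : Fin 2) = 0 := rfl
@[simp] lemma fmk2_1 (h : 1 < 2) : (⟨1, h⟩ : Fin 2) = 1 := rfl
@[simp] lemma fmk7_0 (h : 0 < 7) : (⟨0, h⟩ : Fin 7) = 0 := rfl
@[simp] lemma fmk7_1 (h : 1 < 7) : (⟨1, h⟩ : Fin 7) = 1 := rfl
@[simp] lemma fmk7_2 (h : 2 < 7) : (⟨2, h⟩ : Fin 7) = 2 := rfl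
@[simp] lemma fmk7_3 (h : 3 < 7) : (⟨3, h⟩ : Fin 7) = 3 := rfl
@[simp] lemma fmk7_4 (h : 4 < 7) : (⟨4, h⟩ : Fin 7) = 4 := rfl
@[simp] lemma fmk7_5 (h : 5 < 7) : (⟨5, h⟩ : Fin 7) = 5 := rfl
@[simp] lemma fmk7_6 (h : 6 < 7) : (⟨6, h⟩ : Fin 7) = 6 := rfl
@[simp] lemma fmk9_0 (h : 0 < 9) : (⟨0, h⟩ : Fin 9) = 0 := rfl
@[simp] lemma fmk9_1 (h : 1 < 9) : (⟨1, h⟩ : Fin 9) = 1 := rfl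
@[simp] lemma fmk9_2 (h : 2 < 9) : (⟨2, h⟩ : Fin 9) = 2 := rfl
@[simp] lemma fmk9_3 (h : 3 < 9) : (⟨3, h⟩ : Fin 9) = 3 := rfl
@[simp] lemma fmk9_4 (h : 4 < 9) : (⟨4, h⟩ : Fin 9) = 4 := rfl
@[simp] lemma fmk9_5 (h : 5 < 9) : (⟨5, h⟩ : Fin 9) = 5 := rfl
@[simp] lemma fmk9_6 (h : 6 < 9) : (⟨6, h⟩ : Fin 9) = 6 := rfl
@[simp] lemma fmk9_7 (h : 7 < 9) : (⟨7, h⟩ : Fin 9) = 7 := rfl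
@[simp] lemma fmk9_8 (h : 8 < 9) : (⟨8, h⟩ : Fin 9) = 8 := rfl
end aux

theorem stmt3 (g1 g2 g3 h1 : ℝ) (hh1 : h1 ≠ 0)
    (hg : g2*g3 + g3*g1 + g1*g2 = 0)
    (hne : g1 ≠ 0 ∧ g2 ≠ 0 ∧ g3 ≠ 0)
    (hdist : g1 ≠ g2 ∧ g2 ≠ g3 ∧ g1 ≠ g3) :
    let d0 : (Fin 2 → ℝ) →ₗ[ℝ] (Fin 9 → ℝ) :=
      Matrix.mulVecLin
        (!![-1,0; 0,0; 0,0; 0,0; g1+g2+g3,0; 0,g3-g2; -g3,0; g2,0; h1,0])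
    let d1 : (Fin 9 → ℝ) →ₗ[ℝ] (Fin 7 → ℝ) :=
      Matrix.mulVecLin
        (!![0,0,0,0,-g2-g3,0,g1-g3,g2-g1,0;
            2*h1,0,0,0,0,0,0,0,2;
            0,2*h1,0,0,0,0,0,0,0;
            0,0,2*h1,0,0,0,0,0,0;
            0,0,0,2*h1,0,0,0,0,0;
            0,0,0,0,-h1,0,0,0,g1+g2+g3;
            -2*g1*h1,0,0,0,-h1,0,-h1,h1,-g1])
    d1 ∘ₗ d0 = 0 ∧
    Function.Injective d0 ∧
    LinearMap.ker d1 = LinearMap.range d0 ∧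
    Function.Surjective d1 := by
  obtain ⟨hg1, hg2, hg3⟩ := hne
  obtain ⟨h12, h23, h13⟩ := hdist
  have h32 : g3 - g2 ≠ 0 := sub_ne_zero.mpr (Ne.symm h23)
  intro d0 d1
  have hd : d1 ∘ₗ d0 = 0 := by
    apply LinearMap.ext; intro x
    funext i
    fin_cases i <;>
      simp [d0, d1, Matrix.mulVecLin_apply, Matrix.mulVec, dotProduct,
        Fin.sum_univ_succ] <;>
      ring_nf <;>
      linear_combination (-2 * x 0) * hg
  refine ⟨hd, ?_, ?_, ?_⟩
  · intro x y hxy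
    have h0 := congrFun hxy 0
    have h5 := congrFun hxy 5
    simp [d0, Matrix.mulVecLin_apply, Matrix.mulVec, dotProduct,
      Fin.sum_univ_succ] at h0 h5
    funext i
    fin_cases i
    · simpa using h0
    · exact h5.resolve_right h32
  · ext x
    simp only [LinearMap.mem_ker, LinearMap.mem_range]
    constructor
    · intro hx
      have e0 := congrFun hx 0
      have e1 := congrFun hx 1
      have e2 := congrFun hx 2
      have e3 := congrFun hx 3
      have e4 := congrFun hx 4
      have e5 := congrFun hx 5
      have e6 := congrFun hx 6
      simp [d1, Matrix.mulVecLin_apply, Matrix.mulVec, dotProduct,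
        Fin.sum_univ_succ] at e0 e1 e2 e3 e4 e5 e6
      simp only [hh1, false_or] at e2 e3 e4
      refine ⟨![-(x 0), x 5 / (g3 - g2)], ?_⟩
      have hx8 : x 8 = -(h1 * x 0) := by linarith
      have hx4 : x 4 = -((g1+g2+g3) * x 0) := by
        apply mul_left_cancel₀ hh1
        linear_combination -e5 + (g1+g2+g3)*hx8
      have hA : x 7 - x 6 = -((g2+g3) * x 0) := by
        apply mul_left_cancel₀ hh1
        linear_combination e6 + h1*hx4 + g1*hx8
      have hx6 : x 6 = g3 * x 0 := by
        apply mul_left_cancel₀ h32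
        linear_combination -e0 - (g2+g3)*hx4 + (g2-g1)*hA + 2*(x 0)*hg
      have hx7 : x 7 = -(g2 * x 0) := by linear_combination hA + hx6
      funext i
      fin_cases i <;>
        simp [d0, Matrix.mulVecLin_apply, Matrix.mulVec, dotProduct,
          Fin.sum_univ_succ] <;>
        first
          | linarith [hx8, hx4, hx6, hx7, e1, e2, e3, e4]
          | field_simp
    · rintro ⟨y, rfl⟩
      have h := DFunLike.congr_fun hd y
      simpa using h
  · intro b
    refine ⟨![b 1/(2*h1), b 2/(2*h1), b 3/(2*h1), b 4/(2*h1), -(b 5)/h1, 0,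
      ((b 0 - (g2+g3)*(b 5)/h1)*h1 - (g2-g1)*(b 6 + g1*(b 1) - b 5))/(h1*(g2-g3)),
      (h1*(b 0 - (g2+g3)*(b 5)/h1) + (g1-g3)*(b 6 + g1*(b 1) - b 5))/(h1*(g2-g3)), 0], ?_⟩
    have h23' : g2 - g3 ≠ 0 := sub_ne_zero.mpr h23
    funext i
    fin_cases i <;>
      simp [d1, Matrix.mulVecLin_apply, Matrix.mulVec, dotProduct,
        Fin.sum_univ_succ] <;>
      field_simp <;>
      ring
end

section
/- Let u > 0 and u ≠ 1 be real. Define d0 : ℝ^5 → ℝ^4 by the matrix [[−1/2,0,0,0,0],[1/2,0,0,0,−u/2],[1/2,0,0,0,−1/(2u)],[0,0,0,0,−1/2]] and d1 : ℝ^4 → ℝ by [(1+u^2)/(6u), 1/(6u), u/6, −1/3]. Then d1 ∘ d0 = 0, dim ker d0 = 3, dim ker d1 / im d0 = 1, and d1 is surjective. -/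
/-!
`d0` has only two nonzero columns, and they are linearly independent, so `d0` has rank 2 and
`ker d0` has dimension 3. The entry `-1/3` of `d1` is nonzero, so `d1` is onto and `ker d1` has
dimension 3; since `d1 ∘ d0 = 0`, the image of `d0` sits in `ker d1` and leaves a quotient of
dimension `3 - 2 = 1`.
-/

open Module LinearMap

section Homology

variable {K U V W : Type*} [DivisionRing K] [AddCommGroup U] [Module K U]
  [AddCommGroup V] [Module K V] [AddCommGroup W] [Module K W]

theorem finrank_homology_add_finrank_range [FiniteDimensional K V] (f : U →ₗ[K] V)
    (g : V →ₗ[K] W) (hgf : g ∘ₗ f = 0) :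
    finrank K (ker g ⧸ (range f).comap (ker g).subtype) + finrank K (range f) =
      finrank K (ker g) := by
  rw [← (Submodule.comapSubtypeEquivOfLe (range_le_ker_iff.2 hgf)).finrank_eq]
  exact Submodule.finrank_quotient_add_finrank _

theorem finrank_ker_add_finrank_of_surjective [FiniteDimensional K V] {g : V →ₗ[K] W}
    (hg : Function.Surjective g) : finrank K (ker g) + finrank K W = finrank K V := by
  rw [← finrank_top K W, ← range_eq_top.2 hg, add_comm]
  exact g.finrank_range_add_finrank_ker

end Homology

theorem Matrix.mulVecLin_surjective_of_ne_zero {K n : Type*} [Field K] [Fintype n]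
    [DecidableEq n] {M : Matrix (Fin 1) n K} {j : n} (hj : M 0 j ≠ 0) :
    Function.Surjective M.mulVecLin := by
  intro y
  refine ⟨Pi.single j (y 0 / M 0 j), funext fun i => ?_⟩
  rw [Subsingleton.elim i 0, Matrix.mulVecLin_apply, Matrix.mulVec_single, Pi.smul_apply,
    MulOpposite.smul_eq_mul_unop, MulOpposite.unop_op, Matrix.col_apply, mul_div_cancel₀ _ hj]

noncomputable def bounceD0 (u : ℝ) : Matrix (Fin 4) (Fin 5) ℝ :=
  !![-1/2,0,0,0,0; 1/2,0,0,0,-u/2; 1/2,0,0,0,-1/(2*u); 0,0,0,0,-1/2]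

noncomputable def bounceD1 (u : ℝ) : Matrix (Fin 1) (Fin 4) ℝ :=
  !![(1+u^2)/(6*u), 1/(6*u), u/6, -1/3]

theorem bounceD1_mul_bounceD0 {u : ℝ} (hu : u ≠ 0) : bounceD1 u * bounceD0 u = 0 := by
  ext i j
  fin_cases i; fin_cases j <;>
    simp [bounceD0, bounceD1, Matrix.mul_apply, Fin.sum_univ_succ] <;> field_simp <;> ring

theorem mulVecLin_bounceD1_comp_mulVecLin_bounceD0 {u : ℝ} (hu : u ≠ 0) :
    (bounceD1 u).mulVecLin ∘ₗ (bounceD0 u).mulVecLin = 0 := by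
  rw [← Matrix.mulVecLin_mul, bounceD1_mul_bounceD0 hu, Matrix.mulVecLin_zero]

theorem col_bounceD0 (u : ℝ) :
    (bounceD0 u).col = ![(bounceD0 u).col 0, 0, 0, 0, (bounceD0 u).col 4] := by
  ext j i
  fin_cases j <;> fin_cases i <;> simp [bounceD0]

theorem range_mulVecLin_bounceD0 (u : ℝ) :
    range (bounceD0 u).mulVecLin =
      Submodule.span ℝ {(bounceD0 u).col 0, (bounceD0 u).col 4} := by
  rw [Matrix.range_mulVecLin, col_bounceD0]
  simp only [Matrix.range_cons, Matrix.range_empty, Set.union_empty, Set.union_singleton,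
    Set.union_insert, Set.union_self, Matrix.cons_val_zero, Matrix.cons_val]
  rw [Set.insert_comm, Submodule.span_insert_zero, Set.pair_comm]

theorem linearIndependent_bounceD0_col (u : ℝ) :
    LinearIndependent ℝ ![(bounceD0 u).col 0, (bounceD0 u).col 4] := by
  rw [LinearIndependent.pair_iff]
  intro s t h
  exact ⟨by simpa [bounceD0] using congrFun h 0, by simpa [bounceD0] using congrFun h 3⟩

theorem finrank_range_mulVecLin_bounceD0 (u : ℝ) :
    finrank ℝ (range (bounceD0 u).mulVecLin) = 2 := by
  rw [range_mulVecLin_bounceD0, ← Matrix.range_cons_cons_empty]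
  exact (finrank_span_eq_card (linearIndependent_bounceD0_col u)).trans (by simp)

theorem stmt8_general (u : ℝ) (hu : 0 < u) :
    let d0 : (Fin 5 → ℝ) →ₗ[ℝ] (Fin 4 → ℝ) :=
      Matrix.mulVecLin
        (!![-1/2,0,0,0,0; 1/2,0,0,0,-u/2; 1/2,0,0,0,-1/(2*u); 0,0,0,0,-1/2])
    let d1 : (Fin 4 → ℝ) →ₗ[ℝ] (Fin 1 → ℝ) :=
      Matrix.mulVecLin (!![(1+u^2)/(6*u), 1/(6*u), u/6, -1/3])
    d1 ∘ₗ d0 = 0 ∧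
    Module.finrank ℝ (LinearMap.ker d0) = 3 ∧
    Module.finrank ℝ
      (↥(LinearMap.ker d1) ⧸
        (LinearMap.range d0).comap (LinearMap.ker d1).subtype) = 1 ∧
    Function.Surjective d1 := by
  intro d0 d1
  have hcomp : d1 ∘ₗ d0 = 0 := mulVecLin_bounceD1_comp_mulVecLin_bounceD0 hu.ne'
  have hsurj : Function.Surjective d1 :=
    Matrix.mulVecLin_surjective_of_ne_zero (M := bounceD1 u) (j := 3) (by simp [bounceD1])
  have hrange : finrank ℝ (range d0) = 2 := finrank_range_mulVecLin_bounceD0 u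
  have hker0 := d0.finrank_range_add_finrank_ker
  have hker1 := finrank_ker_add_finrank_of_surjective hsurj
  have hhom := finrank_homology_add_finrank_range d0 d1 hcomp
  simp only [finrank_fin_fun] at hker0 hker1
  exact ⟨hcomp, by omega, by omega, hsurj⟩

theorem stmt8 (u : ℝ) (hu : 0 < u) (hu1 : u ≠ 1) :
    let d0 : (Fin 5 → ℝ) →ₗ[ℝ] (Fin 4 → ℝ) :=
      Matrix.mulVecLin
        (!![-1/2,0,0,0,0; 1/2,0,0,0,-u/2; 1/2,0,0,0,-1/(2*u); 0,0,0,0,-1/2])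
    let d1 : (Fin 4 → ℝ) →ₗ[ℝ] (Fin 1 → ℝ) :=
      Matrix.mulVecLin (!![(1+u^2)/(6*u), 1/(6*u), u/6, -1/3])
    d1 ∘ₗ d0 = 0 ∧
    Module.finrank ℝ (LinearMap.ker d0) = 3 ∧
    Module.finrank ℝ
      (↥(LinearMap.ker d1) ⧸
        (LinearMap.range d0).comap (LinearMap.ker d1).subtype) = 1 ∧
    Function.Surjective d1 :=
  stmt8_general u hu
end

section
/- Let u > 0, u ≠ 1. Define d0 : ℝ^2 → ℝ^9 with rows (−1,0),(0,0),(0,0),(0,0),(−(1+u^2)/(2u),0),(0,(−1+u^2)/(2u)),(1/(2u),0),(−u/2,0),(1/2,0), and the 7×9 matrix d1 = [[−1,0,0,0,(1+u^2)/(2u),0,1/(2u),−u/2,−1],[1,0,0,0,0,0,0,0,2],[0,1,0,0,0,0,0,0,0],[0,0,1,0,0,0,0,0,0],[0,0,0,1,0,0,0,0,0],[0,0,0,0,−1/2,0,0,0,−(1+u^2)/(2u)],[0,0,0,0,−1/2,0,−1/2,1/2,0]]. Then d1 ∘ d0 = 0, d0 is injective, ker d1 = im d0, and d1 is surjective. 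-/
/-!
The composite vanishes, `d0` has a left inverse and `d1` a right inverse, all checked by
multiplying explicit matrices. Exactness in the middle is then a dimension count:
`range d0 ≤ ker d1`, and both have dimension `2 = 9 - 7`.
-/

open Matrix Module

theorem LinearMap.ker_eq_range_of_comp_eq_zero_of_finrank_add_eq
    {K U V W : Type*} [Field K] [AddCommGroup U] [Module K U] [AddCommGroup V] [Module K V]
    [AddCommGroup W] [Module K W] [FiniteDimensional K V]
    {f : U →ₗ[K] V} {g : V →ₗ[K] W} (hgf : g ∘ₗ f = 0) (hf : Function.Injective f)
    (hg : Function.Surjective g) (hdim : finrank K U + finrank K W = finrank K V) :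
    ker g = range f := by
  refine (Submodule.eq_of_le_of_finrank_eq (range_le_ker_iff.mpr hgf) ?_).symm
  have hrank := g.finrank_range_add_finrank_ker
  rw [range_eq_top.mpr hg, finrank_top] at hrank
  rw [finrank_range_of_inj hf]
  omega

theorem Matrix.mulVec_injective_of_mul_eq_one {m n R : Type*} [Fintype m] [Fintype n]
    [DecidableEq n] [Semiring R] {A : Matrix m n R} {B : Matrix n m R} (h : B * A = 1) :
    Function.Injective A.mulVec :=
  Function.LeftInverse.injective (g := B.mulVec) fun x => by rw [mulVec_mulVec, h, one_mulVec]

noncomputable section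

namespace Bounce

variable (u : ℝ)

def d0Matrix : Matrix (Fin 9) (Fin 2) ℝ :=
  !![-1,0; 0,0; 0,0; 0,0; -(1+u^2)/(2*u),0; 0,(-1+u^2)/(2*u);
      1/(2*u),0; -u/2,0; 1/2,0]

def d1Matrix : Matrix (Fin 7) (Fin 9) ℝ :=
  !![-1,0,0,0,(1+u^2)/(2*u),0,1/(2*u),-u/2,-1;
      1,0,0,0,0,0,0,0,2;
      0,1,0,0,0,0,0,0,0;
      0,0,1,0,0,0,0,0,0;
      0,0,0,1,0,0,0,0,0;
      0,0,0,0,-1/2,0,0,0,-(1+u^2)/(2*u);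
      0,0,0,0,-1/2,0,-1/2,1/2,0]

def d0LeftInverse : Matrix (Fin 2) (Fin 9) ℝ :=
  !![-1,0,0,0,0,0,0,0,0;
      0,0,0,0,0,2*u/(-1+u^2),0,0,0]

def d1RightInverse : Matrix (Fin 9) (Fin 7) ℝ :=
  let c := 2*u/(1-u^2)
  !![0,1,0,0,0,0,0;
      0,0,1,0,0,0,0;
      0,0,0,1,0,0,0;
      0,0,0,0,1,0,0;
      0,0,0,0,0,-2,0;
      0,0,0,0,0,0,0;
      c,c,0,0,0,c/u,c*u;
      c,c,0,0,0,c/u-2,c*u+2;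
      0,0,0,0,0,0,0]

variable {u}

theorem d1Matrix_mul_d0Matrix (hu : u ≠ 0) : d1Matrix u * d0Matrix u = 0 := by
  ext i j
  fin_cases i <;> fin_cases j <;>
    simp [d0Matrix, d1Matrix, mul_apply, Fin.sum_univ_succ, field] <;> ring

theorem d0LeftInverse_mul_d0Matrix (hu : u ≠ 0) (hu2 : u ^ 2 ≠ 1) :
    d0LeftInverse u * d0Matrix u = 1 := by
  have : -1 + u ^ 2 ≠ 0 := by rwa [neg_add_eq_sub, sub_ne_zero]
  ext i j
  fin_cases i <;> fin_cases j <;>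
    simp [d0Matrix, d0LeftInverse, mul_apply, Fin.sum_univ_succ, field]

theorem d1Matrix_mul_d1RightInverse (hu : u ≠ 0) (hu2 : u ^ 2 ≠ 1) :
    d1Matrix u * d1RightInverse u = 1 := by
  have : 1 - u ^ 2 ≠ 0 := sub_ne_zero.mpr hu2.symm
  ext i j
  fin_cases i <;> fin_cases j <;>
    simp [d1Matrix, d1RightInverse, mul_apply, Fin.sum_univ_succ, one_apply, field] <;> ring

end Bounce

end

theorem stmt10 (u : ℝ) (hu : 0 < u) (hu1 : u ≠ 1) :
    let d0 : (Fin 2 → ℝ) →ₗ[ℝ] (Fin 9 → ℝ) :=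
      Matrix.mulVecLin
        (!![-1,0; 0,0; 0,0; 0,0; -(1+u^2)/(2*u),0; 0,(-1+u^2)/(2*u);
            1/(2*u),0; -u/2,0; 1/2,0])
    let d1 : (Fin 9 → ℝ) →ₗ[ℝ] (Fin 7 → ℝ) :=
      Matrix.mulVecLin
        (!![-1,0,0,0,(1+u^2)/(2*u),0,1/(2*u),-u/2,-1;
            1,0,0,0,0,0,0,0,2;
            0,1,0,0,0,0,0,0,0;
            0,0,1,0,0,0,0,0,0;
            0,0,0,1,0,0,0,0,0;
            0,0,0,0,-1/2,0,0,0,-(1+u^2)/(2*u);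
            0,0,0,0,-1/2,0,-1/2,1/2,0])
    d1 ∘ₗ d0 = 0 ∧
    Function.Injective d0 ∧
    LinearMap.ker d1 = LinearMap.range d0 ∧
    Function.Surjective d1 := by
  intro d0 d1
  have hu0 : u ≠ 0 := hu.ne'
  have hu2 : u ^ 2 ≠ 1 := by rwa [Ne, pow_eq_one_iff_of_nonneg hu.le two_ne_zero]
  have hcomp : d1 ∘ₗ d0 = 0 := by
    rw [← mulVecLin_mul]
    exact (congrArg mulVecLin (Bounce.d1Matrix_mul_d0Matrix hu0)).trans mulVecLin_zero
  have hinj : Function.Injective d0 :=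
    mulVec_injective_of_mul_eq_one (Bounce.d0LeftInverse_mul_d0Matrix hu0 hu2)
  have hsurj : Function.Surjective d1 :=
    mulVec_surjective_iff_exists_right_inverse.mpr
      ⟨_, Bounce.d1Matrix_mul_d1RightInverse hu0 hu2⟩
  exact ⟨hcomp, hinj,
    LinearMap.ker_eq_range_of_comp_eq_zero_of_finrank_add_eq hcomp hinj hsurj (by simp), hsurj⟩
end

section
/- Let u > 0, u ≠ 1, and c ∈ ℝ. Define d : ℝ → ℝ^6 by the vector (2, 0, 0, 0, −(1+u^2)/(2u), 1/(2u)). Then the five vectors (0,1,0,0,0,0), (0,0,1,0,0,0), (0,0,0,1,0,0), (1+1/u^2, 0,0,0, −(1+u^2)/(4u^3), 0), (−4/u, 0,0,0, 1+1/u^2, 0) together with the image of d span ℝ^6, and their span intersects im(d) trivially; hence they represent a basis of ℝ^6 / im(d). -/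
private lemma cv5 {α : Type*} (a b c d e f : α) : ![a,b,c,d,e,f] 5 = f := rfl
private lemma cv5' {α : Type*} (a b c d e f : α) (h : (5:ℕ) < 6) :
    ![a,b,c,d,e,f] ⟨5, h⟩ = f := rfl

theorem stmt13 (u : ℝ) (hu : 0 < u) (hu1 : u ≠ 1) (c : ℝ) :
    let d : (Fin 1 → ℝ) →ₗ[ℝ] (Fin 6 → ℝ) :=
      Matrix.mulVecLin (!![2; 0; 0; 0; -(1+u^2)/(2*u); 1/(2*u)])
    let v : Fin 5 → (Fin 6 → ℝ) :=
      ![![0,1,0,0,0,0], ![0,0,1,0,0,0], ![0,0,0,1,0,0],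
        ![1+1/u^2,0,0,0,-(1+u^2)/(4*u^3),0], ![-4/u,0,0,0,1+1/u^2,0]]
    Submodule.span ℝ (Set.range v) ⊔ LinearMap.range d = ⊤ ∧
    Submodule.span ℝ (Set.range v) ⊓ LinearMap.range d = ⊥ := by
  intro d v
  have hu0 : u ≠ 0 := ne_of_gt hu
  set S := Submodule.span ℝ (Set.range v) ⊔ LinearMap.range d with hS
  have hv : ∀ j : Fin 5, v j ∈ S :=
    fun j => Submodule.mem_sup_left (Submodule.subset_span ⟨j, rfl⟩)
  have hd : ∀ y : Fin 1 → ℝ, d y ∈ S :=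
    fun y => Submodule.mem_sup_right ⟨y, rfl⟩
  constructor
  · rw [eq_top_iff, ← (Pi.basisFun ℝ (Fin 6)).span_eq, Submodule.span_le]
    rintro x ⟨i, rfl⟩
    simp only [SetLike.mem_coe, Pi.basisFun_apply]
    fin_cases i
    · -- e0 = v3 + (1/(4u)) • v4
      have h : Pi.single (0 : Fin 6) (1:ℝ) = v 3 + (1/(4*u)) • v 4 := by
        funext j; fin_cases j <;>
          first
          | rfl
          | (simp [v, Pi.single_apply, cv5, cv5']; try field_simp; try ring)
      exact h ▸ Submodule.add_mem _ (hv 3) (Submodule.smul_mem _ _ (hv 4))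
    · have h : Pi.single (1 : Fin 6) (1:ℝ) = v 0 := by
        funext j; fin_cases j <;>
          first
          | rfl
          | (simp [v, Pi.single_apply, cv5, cv5']; try field_simp; try ring)
      exact h ▸ hv 0
    · have h : Pi.single (2 : Fin 6) (1:ℝ) = v 1 := by
        funext j; fin_cases j <;>
          first
          | rfl
          | (simp [v, Pi.single_apply, cv5, cv5']; try field_simp; try ring)
      exact h ▸ hv 1
    · have h : Pi.single (3 : Fin 6) (1:ℝ) = v 2 := by
        funext j; fin_cases j <;>
          first
          | rfl
          | (simp [v, Pi.single_apply, cv5, cv5']; try field_simp; try ring)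
      exact h ▸ hv 2
    · -- e4 = (4u/(1+u²)) • v3 + v4
      have hs : (1:ℝ) + u^2 ≠ 0 := by positivity
      have h : Pi.single (4 : Fin 6) (1:ℝ) = (4*u/(1+u^2)) • v 3 + v 4 := by
        funext j; fin_cases j <;>
          first
          | rfl
          | (simp [v, Pi.single_apply, cv5, cv5']; try field_simp; try ring)
      exact h ▸ Submodule.add_mem _ (Submodule.smul_mem _ _ (hv 3)) (hv 4)
    · -- e5 = u² • v4 + d (2u)
      have h : Pi.single (5 : Fin 6) (1:ℝ) = (u^2) • v 4 + d (fun _ => 2*u) := by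
        funext j
        simp only [d, Matrix.mulVecLin_apply, Matrix.mulVec, dotProduct,
          Fin.sum_univ_one]
        fin_cases j <;>
          first
          | rfl
          | (simp [v, Pi.single_apply, cv5, cv5']; try field_simp; try ring)
      exact h ▸ Submodule.add_mem _ (Submodule.smul_mem _ _ (hv 4)) (hd _)
  · rw [eq_bot_iff]
    rintro x hx
    obtain ⟨h1, y, rfl⟩ := Submodule.mem_inf.mp hx
    have h5 : Submodule.span ℝ (Set.range v) ≤ LinearMap.ker (LinearMap.proj (5 : Fin 6)) := by
      rw [Submodule.span_le]
      rintro _ ⟨j, rfl⟩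
      fin_cases j <;> simp [v, LinearMap.mem_ker, cv5, cv5']
    have hx5 : d y 5 = 0 := h5 h1
    have hM : (!![2; 0; 0; 0; -(1+u^2)/(2*u); 1/(2*u)] : Matrix (Fin 6) (Fin 1) ℝ) 5 0
        = 1/(2*u) := rfl
    have hy0 : y 0 = 0 := by
      simp only [d, Matrix.mulVecLin_apply, Matrix.mulVec, dotProduct,
        Fin.sum_univ_one, hM] at hx5
      have h2u : (1:ℝ)/(2*u) ≠ 0 := by positivity
      rcases mul_eq_zero.mp hx5 with h | h
      · exact absurd h h2u
      · exact h
    have hy : y = 0 := funext fun j => by fin_cases j; exact hy0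
    simp [hy]
end

section
/- Let g1, g2, g3 be nonzero pairwise distinct reals with g2g3 + g3g1 + g1g2 = 0 and suppose the sum of any two of g1, g2, g3 is negative. Then the vector (g2−g3, g3−g1, g1−g2, 0) ∈ ℝ^4 is nonzero, lies in the kernel of the functional (−(g2+g3)/3, −(g3+g1)/3, −(g1+g2)/3, 0), and is not in the image of the 4×5 matrix [[0,0,0,0,g1],[0,0,0,0,g2],[0,0,0,0,g3],[−2g1h1,0,0,0,−h1]] for any h1 ≠ 0; hence it represents a nonzero homology class in degree 1. -/
theorem stmt19 (g1 g2 g3 : ℝ)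
    (hne : g1 ≠ 0 ∧ g2 ≠ 0 ∧ g3 ≠ 0)
    (hdist : g1 ≠ g2 ∧ g2 ≠ g3 ∧ g1 ≠ g3)
    (hg : g2*g3 + g3*g1 + g1*g2 = 0)
    (hsum : g1 + g2 < 0 ∧ g2 + g3 < 0 ∧ g3 + g1 < 0) :
    let v : Fin 4 → ℝ := ![g2-g3, g3-g1, g1-g2, 0]
    let d1 : (Fin 4 → ℝ) →ₗ[ℝ] (Fin 1 → ℝ) :=
      Matrix.mulVecLin (!![-(g2+g3)/3, -(g3+g1)/3, -(g1+g2)/3, 0])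
    v ≠ 0 ∧
    v ∈ LinearMap.ker d1 ∧
    ∀ h1 : ℝ, h1 ≠ 0 →
      v ∉ LinearMap.range
        (Matrix.mulVecLin
          (!![0,0,0,0,g1; 0,0,0,0,g2; 0,0,0,0,g3; -2*g1*h1,0,0,0,-h1]) :
          (Fin 5 → ℝ) →ₗ[ℝ] (Fin 4 → ℝ)) := by
  intro v d1
  obtain ⟨h1ne, h2ne, h3ne⟩ := hne
  obtain ⟨h12, h23, h13⟩ := hdist
  refine ⟨?_, ?_, ?_⟩
  · intro h
    have := congrFun h 0
    simp [v] at this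
    exact h23 (by linarith)
  · rw [LinearMap.mem_ker]
    funext i
    fin_cases i
    simp [d1, v, Matrix.mulVecLin, Matrix.mulVec, dotProduct,
      Fin.sum_univ_succ]
    ring
  · intro h1 hh1 hmem
    obtain ⟨x, hx⟩ := hmem
    have e0 := congrFun hx 0
    have e1 := congrFun hx 1
    have e2 := congrFun hx 2
    simp [v, Matrix.mulVecLin, Matrix.mulVec, dotProduct,
      Fin.sum_univ_succ] at e0 e1 e2
    obtain ⟨t, e0, e1, e2⟩ :
        ∃ t, g1 * t = g2 - g3 ∧ g2 * t = g3 - g1 ∧ g3 * t = g1 - g2 :=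
      ⟨_, e0, e1, e2⟩
    have hs : (g1 + g2 + g3) * t = 0 := by linarith [e0, e1, e2]
    rcases mul_eq_zero.mp hs with hs0 | ht
    · nlinarith [hs0, hg, sq_nonneg g1, sq_nonneg g2, sq_nonneg g3,
        sq_nonneg (g1 - g2)]
    · rw [ht] at e0
      simp at e0
      exact h23 (by linarith)
end
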